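/- Let $\alpha > 1/2$, $\beta > 0$, and let $(a_i)_{i\ge 1}, (d_j)_{j\ge 1}$ be positive sequences with $a_i \le C_1 i^{-\alpha}$, $d_j \le C_2 j^{-\beta}$, and $(d_j)$ monotonically decreasing. Suppose $(c_{i,j})$ satisfies $\sum_{j} c_{i,j}^2 d_j^{-2} \le C^2 a_i^2$ for every $i$. Then for every $\delta > 0$ there exists $K$ such that for every $N\in\mathbb{N}$ there exists a monotonically decreasing $(m_i)_{i\in\mathbb{N}}\subseteq\mathbb{N}_0$ with $\sum_i m_i \le N$ and $\big(\sum_{i\in\mathbb{N}} \sum_{j > m_i} c_{i,j}^2\big)^{1/2} \le K\, N^{-\min\{\alpha - 1/2,\, \beta\} + \delta}$. -/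

import Mathlib

/-!
Spend the budget `N` along normalized weights `w i ∝ (i + 1) ^ (-t)` with `t > 1`, i.e.
`m i = ⌊N w i⌋₊`, so that `∑ m i ≤ N`. Since `d` is decreasing, the tail of row `i` beyond `m i`
is at most `d (m i) ^ 2 C ^ 2 a i ^ 2`, and `N w i ≤ m i + 1` turns a decay rate `γ` of `d` into
the bound `N ^ (-2γ) (i + 1) ^ (2 (γ t - α))`. This is summable in `i` once `γ t < α - 1/2`,
and such a `t > 1` exists for every rate `γ < α - 1/2`; taking `γ ≤ β` within `δ` of
`min (α - 1/2) β` gives the claim.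
-/

open Real

lemma summable_nat_add_one_rpow {p : ℝ} (hp : p < -1) :
    Summable fun n : ℕ => ((n : ℝ) + 1) ^ p := by
  simpa using (summable_nat_add_iff 1).mpr (Real.summable_nat_rpow.mpr hp)

section FloorAllocation

variable {w : ℕ → ℝ} (N : ℕ)

lemma antitone_floor_mul (hw : Antitone w) : Antitone fun i => ⌊N * w i⌋₊ :=
  fun _ _ hij => Nat.floor_mono (mul_le_mul_of_nonneg_left (hw hij) N.cast_nonneg)

lemma sum_floor_mul_le (hw0 : ∀ i, 0 ≤ w i) (hws : Summable w) (hw1 : ∑' i, w i ≤ 1)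
    (F : Finset ℕ) : ∑ i ∈ F, ⌊N * w i⌋₊ ≤ N := by
  suffices h : (∑ i ∈ F, ⌊N * w i⌋₊ : ℝ) ≤ N by exact_mod_cast h
  calc (∑ i ∈ F, ⌊N * w i⌋₊ : ℝ)
      ≤ ∑ i ∈ F, N * w i := by gcongr with i; exact Nat.floor_le (by positivity [hw0 i])
    _ = N * ∑ i ∈ F, w i := (Finset.mul_sum ..).symm
    _ ≤ N * 1 := by gcongr; exact (hws.sum_le_tsum F fun i _ => hw0 i).trans hw1
    _ = N := mul_one _

end FloorAllocation

lemma summable_and_tsum_tail_sq_le {c d : ℕ → ℝ} (hd : Antitone d) (hdpos : ∀ j, 0 < d j)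
    (hc : Summable fun j => c j ^ 2 / d j ^ 2) (m : ℕ) :
    Summable (fun j : {j : ℕ // m ≤ j} => c j ^ 2) ∧
      ∑' j : {j : ℕ // m ≤ j}, c j ^ 2 ≤ d m ^ 2 * ∑' j, c j ^ 2 / d j ^ 2 := by
  have hle : ∀ j : {j : ℕ // m ≤ j}, c j ^ 2 ≤ c j ^ 2 / d j ^ 2 * d m ^ 2 := by
    rintro ⟨j, hj⟩
    calc c j ^ 2 = c j ^ 2 / d j ^ 2 * d j ^ 2 := by field_simp [(hdpos j).ne']
      _ ≤ c j ^ 2 / d j ^ 2 * d m ^ 2 := by gcongr; exacts [(hdpos j).le, hd hj]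
  have hmaj : Summable fun j : {j : ℕ // m ≤ j} => c j ^ 2 / d j ^ 2 * d m ^ 2 :=
    (hc.subtype _).mul_right _
  have hs : Summable (fun j : {j : ℕ // m ≤ j} => c j ^ 2) :=
    hmaj.of_nonneg_of_le (fun _ => sq_nonneg _) hle
  refine ⟨hs, ?_⟩
  calc ∑' j : {j : ℕ // m ≤ j}, c j ^ 2
      ≤ ∑' j : {j : ℕ // m ≤ j}, c j ^ 2 / d j ^ 2 * d m ^ 2 := hs.tsum_le_tsum hle hmaj
    _ = (∑' j : {j : ℕ // m ≤ j}, c j ^ 2 / d j ^ 2) * d m ^ 2 := tsum_mul_right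
    _ ≤ (∑' j, c j ^ 2 / d j ^ 2) * d m ^ 2 := by
        gcongr
        exact hc.tsum_subtype_le _ {j | m ≤ j} fun _ => by positivity
    _ = d m ^ 2 * ∑' j, c j ^ 2 / d j ^ 2 := mul_comm _ _

lemma summable_and_sqrt_tsum_le_of_le_sq {x g : ℕ → ℝ} {B : ℝ} (hB : 0 ≤ B) (hx0 : ∀ i, 0 ≤ x i)
    (hx : ∀ i, x i ≤ (B * g i) ^ 2) (hg : Summable fun i => g i ^ 2) :
    Summable x ∧ √(∑' i, x i) ≤ B * √(∑' i, g i ^ 2) := by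
  have hx' : ∀ i, x i ≤ B ^ 2 * g i ^ 2 := fun i => (hx i).trans_eq (mul_pow ..)
  have hmaj : Summable fun i => B ^ 2 * g i ^ 2 := hg.mul_left _
  have hs : Summable x := hmaj.of_nonneg_of_le hx0 hx'
  refine ⟨hs, ?_⟩
  calc √(∑' i, x i) ≤ √(B ^ 2 * ∑' i, g i ^ 2) :=
        Real.sqrt_le_sqrt ((hs.tsum_le_tsum hx' hmaj).trans_eq tsum_mul_left)
    _ = B * √(∑' i, g i ^ 2) := by rw [Real.sqrt_mul (sq_nonneg B), Real.sqrt_sq hB]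

lemma apply_floor_le_mul_rpow_neg {d : ℕ → ℝ} {C γ x : ℝ} (hC : 0 ≤ C) (hγ : 0 ≤ γ)
    (hd : ∀ j : ℕ, d j ≤ C * ((j : ℝ) + 1) ^ (-γ)) (hx : 0 < x) : d ⌊x⌋₊ ≤ C * x ^ (-γ) :=
  (hd _).trans <| mul_le_mul_of_nonneg_left
    (Real.rpow_le_rpow_of_nonpos hx (Nat.lt_floor_add_one x).le (neg_nonpos.mpr hγ)) hC

noncomputable def powerWeight (t : ℝ) (i : ℕ) : ℝ :=
  ((i : ℝ) + 1) ^ (-t) / ∑' k : ℕ, ((k : ℝ) + 1) ^ (-t)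

section PowerWeight

variable {t : ℝ}

lemma tsum_nat_add_one_rpow_neg_pos (ht : 1 < t) : 0 < ∑' k : ℕ, ((k : ℝ) + 1) ^ (-t) :=
  (summable_nat_add_one_rpow (by linarith)).tsum_pos (fun _ => by positivity) 0 (by simp)

lemma powerWeight_pos (ht : 1 < t) (i : ℕ) : 0 < powerWeight t i :=
  div_pos (by positivity) (tsum_nat_add_one_rpow_neg_pos ht)

lemma antitone_powerWeight (ht : 1 < t) : Antitone (powerWeight t) := fun _ _ hij =>
  div_le_div_of_nonneg_right (Real.rpow_le_rpow_of_nonpos (by positivity) (by gcongr)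
    (by linarith)) (tsum_nat_add_one_rpow_neg_pos ht).le

lemma summable_powerWeight (ht : 1 < t) : Summable (powerWeight t) :=
  (summable_nat_add_one_rpow (by linarith)).div_const _

lemma tsum_powerWeight (ht : 1 < t) : ∑' i, powerWeight t i = 1 := by
  simp only [powerWeight, tsum_div_const]
  exact div_self (tsum_nat_add_one_rpow_neg_pos ht).ne'

lemma mul_powerWeight_rpow_neg (ht : 1 < t) {x γ : ℝ} (hx : 0 < x) (i : ℕ) :
    (x * powerWeight t i) ^ (-γ) =
      (∑' k : ℕ, ((k : ℝ) + 1) ^ (-t)) ^ γ * x ^ (-γ) * ((i : ℝ) + 1) ^ (t * γ) := by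
  have hS := tsum_nat_add_one_rpow_neg_pos ht
  rw [powerWeight, Real.mul_rpow hx.le (by positivity), Real.div_rpow (by positivity) hS.le,
    ← Real.rpow_mul (by positivity), Real.rpow_neg hS.le, neg_mul_neg]
  field_simp

end PowerWeight

theorem exists_allocation_sqrt_tsum_tail_le {α γ C1 C2 C : ℝ} (hγ : 0 < γ) (hγα : γ < α - 1 / 2)
    (hC1 : 0 < C1) (hC2 : 0 < C2) (hC : 0 < C)
    {a d : ℕ → ℝ} (hapos : ∀ i, 0 < a i) (hdpos : ∀ j, 0 < d j)
    (ha : ∀ i : ℕ, a i ≤ C1 * ((i : ℝ) + 1) ^ (-α))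
    (hd : ∀ j : ℕ, d j ≤ C2 * ((j : ℝ) + 1) ^ (-γ)) (hdanti : Antitone d)
    {c : ℕ → ℕ → ℝ} (hcsum : ∀ i, Summable fun j => c i j ^ 2 / d j ^ 2)
    (hcb : ∀ i, ∑' j, c i j ^ 2 / d j ^ 2 ≤ C ^ 2 * a i ^ 2) :
    ∃ K > (0 : ℝ), ∀ N : ℕ, 1 ≤ N → ∃ m : ℕ → ℕ, Antitone m ∧
      (∀ F : Finset ℕ, ∑ i ∈ F, m i ≤ N) ∧
      (Summable fun i => ∑' j : {j : ℕ // m i ≤ j}, c i j ^ 2) ∧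
      √(∑' i, ∑' j : {j : ℕ // m i ≤ j}, c i j ^ 2) ≤ K * (N : ℝ) ^ (-γ) := by
  obtain ⟨s, hγs, hsα⟩ := exists_between hγα
  set t := s / γ
  have ht : 1 < t := (one_lt_div hγ).mpr hγs
  set S := ∑' k : ℕ, ((k : ℝ) + 1) ^ (-t)
  have hS : 0 < S := tsum_nat_add_one_rpow_neg_pos ht
  set g : ℕ → ℝ := fun i => ((i : ℝ) + 1) ^ (s - α)
  have hg : Summable fun i => g i ^ 2 :=
    (summable_nat_add_one_rpow (p := (s - α) * (2 : ℕ)) (by push_cast; linarith)).congr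
      fun _ => Real.rpow_mul_natCast (by positivity) _ _
  have hT : 0 < ∑' i, g i ^ 2 := hg.tsum_pos (fun _ => sq_nonneg _) 0 (by simp [g])
  refine ⟨C * C1 * C2 * S ^ γ * √(∑' i, g i ^ 2), by positivity, fun N hN => ?_⟩
  have hN : (0 : ℝ) < N := by exact_mod_cast hN
  set m : ℕ → ℕ := fun i => ⌊N * powerWeight t i⌋₊
  set B := C * C1 * C2 * S ^ γ * (N : ℝ) ^ (-γ)
  have hdm : ∀ i, d (m i) ≤ C2 * S ^ γ * (N : ℝ) ^ (-γ) * ((i : ℝ) + 1) ^ s := fun i => calc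
    d (m i) ≤ C2 * (N * powerWeight t i) ^ (-γ) :=
        apply_floor_le_mul_rpow_neg hC2.le hγ.le hd (mul_pos hN (powerWeight_pos ht i))
    _ = C2 * S ^ γ * (N : ℝ) ^ (-γ) * ((i : ℝ) + 1) ^ s := by
        rw [mul_powerWeight_rpow_neg ht hN, div_mul_cancel₀ s hγ.ne']
        ring
  have htail : ∀ i, ∑' j : {j : ℕ // m i ≤ j}, c i j ^ 2 ≤ (B * g i) ^ 2 := fun i => calc
    _ ≤ d (m i) ^ 2 * ∑' j, c i j ^ 2 / d j ^ 2 :=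
        (summable_and_tsum_tail_sq_le hdanti hdpos (hcsum i) (m i)).2
    _ ≤ (C * a i * d (m i)) ^ 2 := by
        rw [mul_pow, mul_pow, mul_comm _ (d (m i) ^ 2)]
        gcongr
        exact hcb i
    _ ≤ (B * g i) ^ 2 := by
        have hai := (hapos i).le
        have hdi := (hdpos (m i)).le
        refine pow_le_pow_left₀ (by positivity) ?_ 2
        calc C * a i * d (m i)
            ≤ C * (C1 * ((i : ℝ) + 1) ^ (-α)) *
                (C2 * S ^ γ * (N : ℝ) ^ (-γ) * ((i : ℝ) + 1) ^ s) := by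
              gcongr; exacts [ha i, hdm i]
          _ = B * g i := by
              rw [show g i = _ from Real.rpow_sub (by positivity) s α,
                Real.rpow_neg (by positivity)]
              field_simp
              ring
  obtain ⟨hsum, hsqrt⟩ := summable_and_sqrt_tsum_le_of_le_sq (by positivity)
    (fun i => tsum_nonneg fun _ => sq_nonneg _) htail hg
  refine ⟨m, antitone_floor_mul N (antitone_powerWeight ht),
    sum_floor_mul_le N (fun i => (powerWeight_pos ht i).le) (summable_powerWeight ht)
      (tsum_powerWeight ht).le, hsum, hsqrt.trans_eq ?_⟩
  ring

/-- Indexing is 0-based: index `i : ℕ` stands for `i + 1`, and the tail `∑_{j > m_i}` (1-based)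
is the sum over `{j : ℕ // m i ≤ j}` (0-based). -/
theorem stmt7 (α β C1 C2 C : ℝ) (hα : 1 / 2 < α) (hβ : 0 < β)
    (hC1 : 0 < C1) (hC2 : 0 < C2) (hC : 0 < C)
    (a d : ℕ → ℝ) (hapos : ∀ i, 0 < a i) (hdpos : ∀ j, 0 < d j)
    (ha : ∀ i : ℕ, a i ≤ C1 * ((i : ℝ) + 1) ^ (-α))
    (hd : ∀ j : ℕ, d j ≤ C2 * ((j : ℝ) + 1) ^ (-β))
    (hdmono : ∀ j, d (j + 1) ≤ d j)
    (c : ℕ → ℕ → ℝ)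
    (hcsum : ∀ i, Summable fun j => (c i j) ^ 2 / (d j) ^ 2)
    (hcb : ∀ i, ∑' j, (c i j) ^ 2 / (d j) ^ 2 ≤ C ^ 2 * (a i) ^ 2)
    (δ : ℝ) (hδ : 0 < δ) :
    ∃ K > (0 : ℝ), ∀ N : ℕ, 1 ≤ N → ∃ m : ℕ → ℕ,
      (∀ i, m (i + 1) ≤ m i) ∧
      (∀ F : Finset ℕ, ∑ i ∈ F, m i ≤ N) ∧
      (Summable fun i => ∑' j : {j : ℕ // m i ≤ j}, (c i (j : ℕ)) ^ 2) ∧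
      Real.sqrt (∑' i, ∑' j : {j : ℕ // m i ≤ j}, (c i (j : ℕ)) ^ 2) ≤
        K * (N : ℝ) ^ (-(min (α - 1 / 2) β) + δ) := by
  set μ := min (α - 1 / 2) β
  have hμα : μ ≤ α - 1 / 2 := min_le_left _ _
  have hμβ : μ ≤ β := min_le_right _ _
  have hμ : 0 < μ := lt_min (by linarith) hβ
  set γ := max (μ - δ) (μ / 2)
  have hγ : 0 < γ := lt_max_of_lt_right (by linarith)
  have hγα : γ < α - 1 / 2 := max_lt (by linarith) (by linarith)
  have hγβ : γ ≤ β := max_le (by linarith) (by linarith)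
  have hd' : ∀ j : ℕ, d j ≤ C2 * ((j : ℝ) + 1) ^ (-γ) := fun j =>
    (hd j).trans (mul_le_mul_of_nonneg_left
      (Real.rpow_le_rpow_of_exponent_le (by simp) (by linarith)) hC2.le)
  obtain ⟨K, hK, hKN⟩ := exists_allocation_sqrt_tsum_tail_le hγ hγα hC1 hC2 hC hapos hdpos ha
    hd' (antitone_nat_of_succ_le hdmono) hcsum hcb
  refine ⟨K, hK, fun N hN => ?_⟩
  obtain ⟨m, hm, hmN, hsum, hsqrt⟩ := hKN N hN
  refine ⟨m, fun i => hm i.le_succ, hmN, hsum, hsqrt.trans ?_⟩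
  gcongr
  · exact_mod_cast hN
  · linarith [le_max_left (μ - δ) (μ / 2)]
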